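/- For the modified stick-breaking process with parameters $\tilde\nu \in (0,1]$ and $\theta^* > 0$, and for all positive integers $n_1, n_2$: $\mathbb{E}\left[X_1^{n_1} X_2^{n_2} (1 - \tilde\nu X_1)\right] = \frac{\theta^*\, \tilde\nu^2\, n_1!\, n_2!\, \Gamma(\theta^* + 1)}{\Gamma(\theta^* + n_1 + n_2 + 2)}$. -/

import Mathlib

open MeasureTheory ProbabilityTheory
open scoped BigOperators ENNReal

/-- `sbEta ν U B n` is the remaining-stick variable `η_n` of the modified stick-breaking
process: `η_0 = 1`, `η_n = η_{n-1}(1 - D_n)` with `D_n = ξ_n B_n` and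
`ξ_n = 1{U_n ≤ ν η_{n-1}/(1-ν+ν η_{n-1})}` (here `U (n-1), B (n-1)` play the role of
the paper's `U_n, B_n`). -/
noncomputable def sbEta (ν : ℝ) {Ω : Type*} (U B : ℕ → Ω → ℝ) : ℕ → Ω → ℝ
  | 0 => fun _ => 1
  | n + 1 => fun ω =>
      sbEta ν U B n ω *
        (1 - if U n ω ≤ ν * sbEta ν U B n ω / (1 - ν + ν * sbEta ν U B n ω)
             then B n ω else 0)

/-- `sbX ν U B n = X_{n+1} = η_n D_{n+1}` of the modified stick-breaking process. -/
noncomputable def sbX (ν : ℝ) {Ω : Type*} (U B : ℕ → Ω → ℝ) (n : ℕ) (ω : Ω) : ℝ :=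
  sbEta ν U B n ω *
    (if U n ω ≤ ν * sbEta ν U B n ω / (1 - ν + ν * sbEta ν U B n ω)
     then B n ω else 0)

/-!
With `p ν η = ν η / (1 - ν + ν η)` (`sbAcceptProb`), `X₁ = 1{U 0 ≤ ν} B 0` and
`X₂ = (1 - X₁) 1{U 1 ≤ p ν (1 - X₁)} B 1`. Since `n₁, n₂ ≥ 1`, the integrand factors as
`1{U 0 ≤ ν} (B 1)^n₂ · 1{U 1 ≤ p ν (1 - B 0)} (B 0)^n₁ (1 - B 0)^n₂ (1 - ν B 0)`, a product of
functions of the independent pairs `(U 0, B 1)` and `(B 0, U 1)`. Integrating out a uniform `U`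
independent of `X` replaces `1{U ≤ g X}` by `g X`, and `p ν (1 - b) (1 - ν b) = ν (1 - b)` cancels
the weight `1 - ν X₁`. What remains is `ν E[B^n₂] · ν E[B^n₁ (1 - B)^(n₂+1)]`, two moments of the
Beta(1, θ) law of `B`.
-/

open Set

namespace ProbabilityTheory

theorem beta_eq_intervalIntegral {a b : ℝ} (ha : 0 < a) (hb : 0 < b) :
    beta a b = ∫ x in (0 : ℝ)..1, x ^ (a - 1) * (1 - x) ^ (b - 1) := by
  have h : Complex.betaIntegral a b = ↑(∫ x in (0 : ℝ)..1, x ^ (a - 1) * (1 - x) ^ (b - 1)) := by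
    rw [Complex.betaIntegral, ← intervalIntegral.integral_ofReal]
    refine intervalIntegral.integral_congr fun x hx => ?_
    rw [uIcc_of_le zero_le_one] at hx
    push_cast
    rw [Complex.ofReal_cpow hx.1, Complex.ofReal_cpow (sub_nonneg.2 hx.2)]
    push_cast
    rfl
  rw [beta_eq_betaIntegralReal a b ha hb, h, Complex.ofReal_re]

theorem betaPDFReal_nonneg {α β : ℝ} (hα : 0 < α) (hβ : 0 < β) (x : ℝ) :
    0 ≤ betaPDFReal α β x := by
  by_cases hx : 0 < x ∧ x < 1
  · exact (betaPDFReal_pos hx.1 hx.2 hα hβ).le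
  · simp [betaPDFReal, hx]

theorem integrable_betaPDFReal {α β : ℝ} (hα : 0 < α) (hβ : 0 < β) :
    Integrable (betaPDFReal α β) := by
  have h := integrable_toReal_of_lintegral_ne_top
    (measurable_betaPDFReal α β).ennreal_ofReal.aemeasurable
    ((lintegral_betaPDF_eq_one hα hβ).trans_ne ENNReal.one_ne_top)
  simpa [ENNReal.toReal_ofReal (betaPDFReal_nonneg hα hβ _)] using h

theorem integral_pow_mul_one_sub_pow_betaMeasure {α β : ℝ} (hα : 0 < α) (hβ : 0 < β) (n m : ℕ) :
    ∫ x, x ^ n * (1 - x) ^ m ∂betaMeasure α β = beta (α + n) (β + m) / beta α β := by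
  have hdens : ∀ x, betaPDFReal α β x * (x ^ n * (1 - x) ^ m) = (Ioo 0 1).indicator
      (fun x => (beta α β)⁻¹ * (x ^ (α + n - 1) * (1 - x) ^ (β + m - 1))) x := by
    intro x
    by_cases hx : 0 < x ∧ x < 1
    · rw [indicator_of_mem (s := Ioo 0 1) hx, betaPDFReal, if_pos hx, add_sub_right_comm,
        add_sub_right_comm β, Real.rpow_add hx.1, Real.rpow_add (sub_pos.2 hx.2),
        Real.rpow_natCast, Real.rpow_natCast]
      ring
    · rw [indicator_of_notMem (s := Ioo 0 1) hx, betaPDFReal, if_neg hx, zero_mul]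
  rw [betaMeasure, integral_withDensity_eq_integral_toReal_smul (f := betaPDF α β)
    (measurable_betaPDFReal α β).ennreal_ofReal (ae_of_all _ fun _ => ENNReal.ofReal_lt_top)]
  simp only [betaPDF, ENNReal.toReal_ofReal (betaPDFReal_nonneg hα hβ _), smul_eq_mul, hdens]
  rw [integral_indicator measurableSet_Ioo, ← integral_Ioc_eq_integral_Ioo,
    ← intervalIntegral.integral_of_le zero_le_one, intervalIntegral.integral_const_mul,
    ← beta_eq_intervalIntegral (by positivity) (by positivity), inv_mul_eq_div]

theorem beta_one_left {θ : ℝ} (hθ : 0 < θ) : beta 1 θ = θ⁻¹ := by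
  rw [beta, Real.Gamma_one, one_mul, add_comm, Real.Gamma_add_one hθ.ne',
    div_mul_cancel_right₀ (Real.Gamma_pos_of_pos hθ).ne']

theorem betaPDFReal_one_left {θ x : ℝ} (hθ : 0 < θ) (hx : x ∈ Ioo 0 1) :
    betaPDFReal 1 θ x = θ * (1 - x) ^ (θ - 1) := by
  rw [betaPDFReal, if_pos (mem_Ioo.1 hx), beta_one_left hθ, sub_self, Real.rpow_zero, one_div,
    inv_inv, mul_one]

theorem betaMeasure_one_left_Iic {θ x : ℝ} (hθ : 0 < θ) (hx : x ∈ Icc 0 1) :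
    betaMeasure 1 θ (Iic x) = ENNReal.ofReal (1 - (1 - x) ^ θ) := by
  have hint := integrable_betaPDFReal one_pos hθ
  have hderiv : ∀ t ∈ Ioo 0 x, HasDerivAt (fun t => -(1 - t) ^ θ) (betaPDFReal 1 θ t) t := by
    intro t ht
    have ht1 : t < 1 := ht.2.trans_le hx.2
    rw [betaPDFReal_one_left hθ ⟨ht.1, ht1⟩]
    simpa using (((hasDerivAt_id t).const_sub 1).rpow_const (p := θ)
      (Or.inl (sub_pos.2 ht1).ne')).fun_neg
  have hcont : ContinuousOn (fun t : ℝ => -(1 - t) ^ θ) (Icc 0 x) :=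
    (continuous_const.sub continuous_id).rpow_const (fun _ => Or.inr hθ.le) |>.neg.continuousOn
  rw [betaMeasure, withDensity_apply _ measurableSet_Iic]
  simp only [betaPDF]
  rw [← ofReal_integral_eq_lintegral_ofReal hint.integrableOn
      (ae_of_all _ (betaPDFReal_nonneg one_pos hθ)),
    setIntegral_eq_of_subset_of_forall_sdiff_eq_zero measurableSet_Iic
      (Ioc_subset_Iic_self (a := 0)),
    ← intervalIntegral.integral_of_le hx.1,
    intervalIntegral.integral_eq_sub_of_hasDerivAt_of_le hx.1 hcont hderiv hint.intervalIntegrable]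
  · simp only [sub_zero, Real.one_rpow]
    congr 1
    ring
  · intro t ht
    rw [betaPDFReal, if_neg fun h => ht.2 ⟨h.1, ht.1⟩]

end ProbabilityTheory

theorem MeasureTheory.Measure.ext_of_Iic_of_mem_Icc {μ ν : Measure ℝ} [IsProbabilityMeasure μ]
    [IsProbabilityMeasure ν] {a b : ℝ} (ha : μ (Iic a) = 0) (hb : μ (Iic b) = 1)
    (h : ∀ x ∈ Icc a b, μ (Iic x) = ν (Iic x)) : μ = ν := by
  have hab : a ≤ b := by
    by_contra! hba
    simpa [ha, hb] using measure_mono (μ := μ) (Iic_subset_Iic.2 hba.le)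
  have hνa : ν (Iic a) = 0 := by rw [← h a ⟨le_rfl, hab⟩, ha]
  have hνb : ν (Iic b) = 1 := by rw [← h b ⟨hab, le_rfl⟩, hb]
  refine Measure.ext_of_Iic μ ν fun x => ?_
  rcases lt_or_ge x a with hxa | hax
  · rw [measure_mono_null (Iic_subset_Iic.2 hxa.le) ha,
      measure_mono_null (Iic_subset_Iic.2 hxa.le) hνa]
  rcases le_or_gt x b with hxb | hbx
  · exact h x ⟨hax, hxb⟩
  · rw [(prob_le_one).antisymm (hb ▸ measure_mono (Iic_subset_Iic.2 hbx.le)),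
      (prob_le_one).antisymm (hνb ▸ measure_mono (Iic_subset_Iic.2 hbx.le))]

section Probability

variable {Ω : Type*} [MeasurableSpace Ω] {μ : Measure Ω}

theorem map_eq_betaMeasure_one_left [IsProbabilityMeasure μ] {θ : ℝ} (hθ : 0 < θ)
    {X : Ω → ℝ} (hX : Measurable X)
    (hXd : ∀ x ∈ Icc (0 : ℝ) 1, μ {ω | X ω ≤ x} = ENNReal.ofReal (1 - (1 - x) ^ θ)) :
    μ.map X = betaMeasure 1 θ := by
  have : IsProbabilityMeasure (μ.map X) := Measure.isProbabilityMeasure_map hX.aemeasurable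
  have : IsProbabilityMeasure (betaMeasure 1 θ) := isProbabilityMeasureBeta one_pos hθ
  have hcdf : ∀ x ∈ Icc (0 : ℝ) 1, μ.map X (Iic x) = ENNReal.ofReal (1 - (1 - x) ^ θ) :=
    fun x hx => by rw [Measure.map_apply hX measurableSet_Iic]; exact hXd x hx
  refine Measure.ext_of_Iic_of_mem_Icc (a := 0) (b := 1) ?_ ?_ fun x hx => ?_
  · simp [hcdf 0 ⟨le_rfl, zero_le_one⟩]
  · simp [hcdf 1 ⟨zero_le_one, le_rfl⟩, Real.zero_rpow hθ.ne']
  · rw [hcdf x hx, betaMeasure_one_left_Iic hθ hx]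

theorem integral_pow_mul_one_sub_pow_of_cdf [IsProbabilityMeasure μ] {θ : ℝ} (hθ : 0 < θ)
    {X : Ω → ℝ} (hX : Measurable X)
    (hXd : ∀ x ∈ Icc (0 : ℝ) 1, μ {ω | X ω ≤ x} = ENNReal.ofReal (1 - (1 - x) ^ θ)) (n m : ℕ) :
    ∫ ω, X ω ^ n * (1 - X ω) ^ m ∂μ
      = θ * n.factorial * Real.Gamma (θ + m) / Real.Gamma (θ + n + m + 1) := by
  rw [← integral_map (f := fun x => x ^ n * (1 - x) ^ m) hX.aemeasurable (by fun_prop),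
    map_eq_betaMeasure_one_left hθ hX hXd,
    integral_pow_mul_one_sub_pow_betaMeasure one_pos hθ, beta_one_left hθ, beta,
    add_comm (1 : ℝ), Real.Gamma_nat_eq_factorial,
    show (n : ℝ) + 1 + (θ + m) = θ + n + m + 1 by ring]
  field_simp

theorem integrable_map_of_mapsTo_isCompact [IsFiniteMeasure μ] {X : Ω → ℝ} (hX : Measurable X)
    {K : Set ℝ} (hK : IsCompact K) (hXK : ∀ ω, X ω ∈ K) {f : ℝ → ℝ} (hf : Continuous f) :
    Integrable f (μ.map X) := by
  obtain ⟨C, hC⟩ := hK.exists_bound_of_continuousOn hf.continuousOn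
  exact (integrable_map_measure hf.aestronglyMeasurable hX.aemeasurable).2 <|
    .of_bound (hf.measurable.comp hX).aestronglyMeasurable C (ae_of_all _ fun ω => hC _ (hXK ω))

theorem integral_ite_uniform_le_eq_integral_mul {E : Type*} [MeasurableSpace E]
    [IsProbabilityMeasure μ] {X : Ω → E} {U : Ω → ℝ} (hX : Measurable X)
    (hU : Measurable U) (hXU : IndepFun X U μ)
    (hUd : ∀ x ∈ Icc (0 : ℝ) 1, μ {ω | U ω ≤ x} = ENNReal.ofReal x)
    {f p : E → ℝ} (hf : Measurable f) (hfX : Integrable f (μ.map X)) (hp : Measurable p)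
    (hpX : ∀ ω, p (X ω) ∈ Icc 0 1) :
    ∫ ω, (if U ω ≤ p (X ω) then f (X ω) else 0) ∂μ = ∫ ω, p (X ω) * f (X ω) ∂μ := by
  have : IsProbabilityMeasure (μ.map X) := Measure.isProbabilityMeasure_map hX.aemeasurable
  have : IsProbabilityMeasure (μ.map U) := Measure.isProbabilityMeasure_map hU.aemeasurable
  set Φ : E × ℝ → ℝ := fun q => if q.2 ≤ p q.1 then f q.1 else 0
  have hΦ : Measurable Φ :=
    Measurable.ite (measurableSet_le measurable_snd (hp.comp measurable_fst))
      (hf.comp measurable_fst) measurable_const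
  have hlaw : μ.map (fun ω => (X ω, U ω)) = (μ.map X).prod (μ.map U) :=
    (indepFun_iff_map_prod_eq_prod_map_map hX.aemeasurable hU.aemeasurable).1 hXU
  have hΦint : Integrable Φ ((μ.map X).prod (μ.map U)) := by
    refine hfX.comp_fst _ |>.mono hΦ.aestronglyMeasurable (ae_of_all _ fun q => ?_)
    by_cases hq : q.2 ≤ p q.1 <;> simp [Φ, hq]
  have hpX' : ∀ᵐ x ∂μ.map X, p x ∈ Icc 0 1 :=
    (ae_map_iff hX.aemeasurable (measurableSet_Icc.preimage hp)).2 (ae_of_all _ hpX)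
  have hinner : ∀ᵐ x ∂μ.map X, ∫ u, Φ (x, u) ∂μ.map U = p x * f x := by
    filter_upwards [hpX'] with x hx
    have hΦx : (fun u => Φ (x, u)) = (Iic (p x)).indicator fun _ => f x := by
      ext u
      simp [Φ, indicator_apply]
    rw [hΦx, integral_indicator_const _ measurableSet_Iic, measureReal_def,
      Measure.map_apply hU measurableSet_Iic,
      show μ (U ⁻¹' Iic (p x)) = ENNReal.ofReal (p x) from hUd _ hx,
      ENNReal.toReal_ofReal hx.1, smul_eq_mul]
  calc ∫ ω, (if U ω ≤ p (X ω) then f (X ω) else 0) ∂μ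
      = ∫ q, Φ q ∂μ.map (fun ω => (X ω, U ω)) :=
        (integral_map (hX.prodMk hU).aemeasurable hΦ.aestronglyMeasurable).symm
    _ = ∫ x, ∫ u, Φ (x, u) ∂μ.map U ∂μ.map X := by rw [hlaw, integral_prod _ hΦint]
    _ = ∫ x, p x * f x ∂μ.map X := integral_congr_ae hinner
    _ = ∫ ω, p (X ω) * f (X ω) ∂μ :=
        integral_map hX.aemeasurable (hp.mul hf).aestronglyMeasurable

end Probability

noncomputable def sbAcceptProb (ν η : ℝ) : ℝ := ν * η / (1 - ν + ν * η)

@[fun_prop]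
theorem measurable_sbAcceptProb (ν : ℝ) : Measurable (sbAcceptProb ν) := by
  unfold sbAcceptProb
  fun_prop

theorem sbAcceptProb_one (ν : ℝ) : sbAcceptProb ν 1 = ν := by
  simp [sbAcceptProb]

theorem sbAcceptProb_mem_Icc {ν η : ℝ} (hν0 : 0 ≤ ν) (hν1 : ν ≤ 1) (hη : η ∈ Icc 0 1) :
    sbAcceptProb ν η ∈ Icc 0 1 := by
  have hνη : 0 ≤ ν * η := mul_nonneg hν0 hη.1
  exact ⟨div_nonneg hνη (by linarith), div_le_one_of_le₀ (by linarith) (by linarith)⟩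

theorem sbAcceptProb_one_sub_mul {ν b : ℝ} (hν0 : 0 ≤ ν) (hν1 : ν ≤ 1) (hb : b ≤ 1) :
    sbAcceptProb ν (1 - b) * (1 - ν * b) = ν * (1 - b) := by
  rw [sbAcceptProb, show 1 - ν + ν * (1 - b) = 1 - ν * b by ring]
  rcases eq_or_ne (1 - ν * b) 0 with h | h
  · rw [h, mul_zero]
    nlinarith [mul_nonneg hν0 (sub_nonneg.2 hb)]
  · exact div_mul_cancel₀ _ h

section StickBreaking

variable {Ω : Type*} (ν : ℝ) (U B : ℕ → Ω → ℝ) (ω : Ω)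

theorem sbX_eq_sbEta_mul (n : ℕ) : sbX ν U B n ω =
    sbEta ν U B n ω * if U n ω ≤ sbAcceptProb ν (sbEta ν U B n ω) then B n ω else 0 :=
  rfl

theorem sbEta_succ (n : ℕ) : sbEta ν U B (n + 1) ω = sbEta ν U B n ω - sbX ν U B n ω := by
  rw [sbEta, sbX]
  ring

theorem sbX_zero : sbX ν U B 0 ω = if U 0 ω ≤ ν then B 0 ω else 0 := by
  rw [sbX_eq_sbEta_mul, sbEta, sbAcceptProb_one, one_mul]

theorem sbX_one : sbX ν U B 1 ω =
    (1 - sbX ν U B 0 ω) * if U 1 ω ≤ sbAcceptProb ν (1 - sbX ν U B 0 ω) then B 1 ω else 0 := by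
  rw [sbX_eq_sbEta_mul, sbEta_succ, sbEta]

theorem sbX_zero_pow_mul_sbX_one_pow {n₁ n₂ : ℕ} (hn₁ : n₁ ≠ 0) (hn₂ : n₂ ≠ 0) :
    sbX ν U B 0 ω ^ n₁ * sbX ν U B 1 ω ^ n₂ * (1 - ν * sbX ν U B 0 ω) =
      (if U 0 ω ≤ ν then B 1 ω ^ n₂ else 0) *
        if U 1 ω ≤ sbAcceptProb ν (1 - B 0 ω) then
          B 0 ω ^ n₁ * (1 - B 0 ω) ^ n₂ * (1 - ν * B 0 ω) else 0 := by
  rw [sbX_one, sbX_zero]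
  split_ifs <;> simp [hn₁, hn₂, mul_pow]
  ring

end StickBreaking

section Independence

variable {Ω : Type*} [MeasurableSpace Ω] {μ : Measure Ω}

theorem integral_ite_le_sbAcceptProb [IsProbabilityMeasure μ] {ν : ℝ} (hν0 : 0 ≤ ν)
    (hν1 : ν ≤ 1) {X U : Ω → ℝ} (hX : Measurable X) (hU : Measurable U) (hXU : IndepFun X U μ)
    (hXr : ∀ ω, X ω ∈ Icc 0 1) (hUd : ∀ x ∈ Icc (0 : ℝ) 1, μ {ω | U ω ≤ x} = ENNReal.ofReal x)
    (n m : ℕ) :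
    ∫ ω, (if U ω ≤ sbAcceptProb ν (1 - X ω) then
        X ω ^ n * (1 - X ω) ^ m * (1 - ν * X ω) else 0) ∂μ
      = ν * ∫ ω, X ω ^ n * (1 - X ω) ^ (m + 1) ∂μ := by
  rw [integral_ite_uniform_le_eq_integral_mul hX hU hXU hUd
    (f := fun x => x ^ n * (1 - x) ^ m * (1 - ν * x)) (p := fun x => sbAcceptProb ν (1 - x))
    (by fun_prop) (integrable_map_of_mapsTo_isCompact hX isCompact_Icc hXr (by fun_prop))
    (by fun_prop) fun ω =>
      sbAcceptProb_mem_Icc hν0 hν1 ⟨sub_nonneg.2 (hXr ω).2, by linarith [(hXr ω).1]⟩,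
    ← integral_const_mul]
  congr with ω
  linear_combination (X ω ^ n * (1 - X ω) ^ m) * sbAcceptProb_one_sub_mul hν0 hν1 (hXr ω).2

theorem integral_sbX_moment_eq_mul {ν : ℝ} {U B : ℕ → Ω → ℝ} (hU : ∀ n, Measurable (U n))
    (hB : ∀ n, Measurable (B n)) (hindep : iIndepFun (Sum.elim U B) μ) {n₁ n₂ : ℕ}
    (hn₁ : n₁ ≠ 0) (hn₂ : n₂ ≠ 0) :
    ∫ ω, sbX ν U B 0 ω ^ n₁ * sbX ν U B 1 ω ^ n₂ * (1 - ν * sbX ν U B 0 ω) ∂μ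
      = (∫ ω, (if U 0 ω ≤ ν then B 1 ω ^ n₂ else 0) ∂μ) *
          ∫ ω, (if U 1 ω ≤ sbAcceptProb ν (1 - B 0 ω) then
            B 0 ω ^ n₁ * (1 - B 0 ω) ^ n₂ * (1 - ν * B 0 ω) else 0) ∂μ := by
  have hpairs : IndepFun (fun ω => (U 0 ω, B 1 ω)) (fun ω => (B 0 ω, U 1 ω)) μ := by
    simpa using hindep.indepFun_prodMk_prodMk (fun i => i.rec hU hB) (.inl 0) (.inr 1) (.inr 0)
      (.inl 1) (by simp) (by simp) (by simp) (by simp)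
  rw [integral_congr_ae (ae_of_all _ (sbX_zero_pow_mul_sbX_one_pow ν U B · hn₁ hn₂))]
  exact hpairs.integral_fun_comp_mul_comp (f := fun q => if q.1 ≤ ν then q.2 ^ n₂ else 0)
    (g := fun q => if q.2 ≤ sbAcceptProb ν (1 - q.1) then
      q.1 ^ n₁ * (1 - q.1) ^ n₂ * (1 - ν * q.1) else 0)
    ((hU 0).prodMk (hB 1)).aemeasurable ((hB 0).prodMk (hU 1)).aemeasurable
    (Measurable.ite (measurableSet_le measurable_fst measurable_const) (by fun_prop)
      measurable_const).aestronglyMeasurable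
    (Measurable.ite (measurableSet_le measurable_snd (by fun_prop)) (by fun_prop)
      measurable_const).aestronglyMeasurable

end Independence

theorem sb_joint_moments_general {Ω : Type*} [MeasurableSpace Ω] (μ : Measure Ω)
    [IsProbabilityMeasure μ]
    (ν θ : ℝ) (hν0 : 0 < ν) (hν1 : ν ≤ 1) (hθ : 0 < θ)
    (U B : ℕ → Ω → ℝ)
    (hU : ∀ n, Measurable (U n)) (hB : ∀ n, Measurable (B n))
    (hBr : ∀ n ω, B n ω ∈ Set.Icc (0 : ℝ) 1)
    (hUd : ∀ n, ∀ x ∈ Set.Icc (0 : ℝ) 1,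
      μ {ω | U n ω ≤ x} = ENNReal.ofReal x)
    (hBd : ∀ n, ∀ x ∈ Set.Icc (0 : ℝ) 1,
      μ {ω | B n ω ≤ x} = ENNReal.ofReal (1 - (1 - x) ^ θ))
    (hindep : iIndepFun (Sum.elim U B) μ)
    (n₁ n₂ : ℕ) (hn₁ : 1 ≤ n₁) (hn₂ : 1 ≤ n₂) :
    ∫ ω, (sbX ν U B 0 ω) ^ n₁ * (sbX ν U B 1 ω) ^ n₂ * (1 - ν * sbX ν U B 0 ω) ∂μ
      = θ * ν ^ 2 * (n₁.factorial : ℝ) * (n₂.factorial : ℝ) * Real.Gamma (θ + 1) /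
          Real.Gamma (θ + n₁ + n₂ + 2) := by
  have hB1U0 : IndepFun (B 1) (U 0) μ := hindep.indepFun (i := .inr 1) (j := .inl 0) (by simp)
  have hB0U1 : IndepFun (B 0) (U 1) μ := hindep.indepFun (i := .inr 0) (j := .inl 1) (by simp)
  have hmom₂ := integral_pow_mul_one_sub_pow_of_cdf hθ (hB 1) (hBd 1) n₂ 0
  simp only [pow_zero, mul_one, CharP.cast_eq_zero, add_zero] at hmom₂
  rw [integral_sbX_moment_eq_mul hU hB hindep (by omega) (by omega),
    integral_ite_uniform_le_eq_integral_mul (hB 1) (hU 0) hB1U0 (hUd 0) (p := fun _ => ν)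
      (by fun_prop) (integrable_map_of_mapsTo_isCompact (hB 1) isCompact_Icc (hBr 1)
        (continuous_pow n₂)) measurable_const fun _ => ⟨hν0.le, hν1⟩,
    integral_ite_le_sbAcceptProb hν0.le hν1 (hB 0) (hU 1) hB0U1 (hBr 0) (hUd 1),
    integral_const_mul, hmom₂, integral_pow_mul_one_sub_pow_of_cdf hθ (hB 0) (hBd 0),
    Real.Gamma_add_one hθ.ne']
  push_cast
  rw [show θ + (n₂ + 1 : ℝ) = θ + n₂ + 1 by ring,
    show θ + n₁ + (n₂ + 1 : ℝ) + 1 = θ + n₁ + n₂ + 2 by ring]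
  have := (Real.Gamma_pos_of_pos (by positivity : 0 < θ + n₂ + 1)).ne'
  field_simp

/-- Joint moments of the first two stick-breaking variables:
`E[X₁^{n₁} X₂^{n₂} (1 - ν X₁)] = θ* ν² n₁! n₂! Γ(θ*+1)/Γ(θ*+n₁+n₂+2)`. -/
theorem sb_joint_moments {Ω : Type*} [MeasurableSpace Ω] (μ : Measure Ω)
    [IsProbabilityMeasure μ]
    (ν θ : ℝ) (hν0 : 0 < ν) (hν1 : ν ≤ 1) (hθ : 0 < θ)
    (U B : ℕ → Ω → ℝ)
    (hU : ∀ n, Measurable (U n)) (hB : ∀ n, Measurable (B n))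
    (hUr : ∀ n ω, U n ω ∈ Set.Icc (0 : ℝ) 1)
    (hBr : ∀ n ω, B n ω ∈ Set.Icc (0 : ℝ) 1)
    (hUd : ∀ n, ∀ x ∈ Set.Icc (0 : ℝ) 1,
      μ {ω | U n ω ≤ x} = ENNReal.ofReal x)
    (hBd : ∀ n, ∀ x ∈ Set.Icc (0 : ℝ) 1,
      μ {ω | B n ω ≤ x} = ENNReal.ofReal (1 - (1 - x) ^ θ))
    (hindep : iIndepFun (Sum.elim U B) μ)
    (n₁ n₂ : ℕ) (hn₁ : 1 ≤ n₁) (hn₂ : 1 ≤ n₂) :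
    ∫ ω, (sbX ν U B 0 ω) ^ n₁ * (sbX ν U B 1 ω) ^ n₂ * (1 - ν * sbX ν U B 0 ω) ∂μ
      = θ * ν ^ 2 * (n₁.factorial : ℝ) * (n₂.factorial : ℝ) * Real.Gamma (θ + 1) /
          Real.Gamma (θ + n₁ + n₂ + 2) :=
  sb_joint_moments_general μ ν θ hν0 hν1 hθ U B hU hB hBr hUd hBd hindep n₁ n₂ hn₁ hn₂
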